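/- Let E and F be subspaces of R^N with ||P_F P_E||_op <= delta, where P_E, P_F are orthogonal projections. Let H = E + F and let E' = F^perp ∩ H. Then for any x in E, ||x - P_{E'} x||_2 <= ||P_F x||_2 <= delta * ||x||_2. -/

import Mathlib

open scoped BigOperators

noncomputable def l2 {d : ℕ} (v : Fin d → ℝ) : ℝ := Real.sqrt (∑ i, (v i)^2)

noncomputable def l1 {d : ℕ} (v : Fin d → ℝ) : ℝ := ∑ i, |v i|

noncomputable def linf {d : ℕ} (v : Fin d → ℝ) : ℝ := ⨆ i, |v i|

noncomputable def restrict {d : ℕ} (v : Fin d → ℝ) (T : Finset (Fin d)) : Fin d → ℝ :=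
  fun i => if i ∈ T then v i else 0

open Classical in
noncomputable def spt {d : ℕ} (v : Fin d → ℝ) : Finset (Fin d) :=
  Finset.univ.filter (fun i => v i ≠ 0)

def RIC {N d : ℕ} (Φ : Matrix (Fin N) (Fin d) ℝ) (m : ℕ) (ε : ℝ) : Prop :=
  ∀ z : Fin d → ℝ, (spt z).card ≤ m →
    (1 - ε) * l2 z ≤ l2 (Φ.mulVec z) ∧ l2 (Φ.mulVec z) ≤ (1 + ε) * l2 z

noncomputable def proj {N : ℕ} (L : Submodule ℝ (EuclideanSpace ℝ (Fin N))) :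
    EuclideanSpace ℝ (Fin N) →L[ℝ] EuclideanSpace ℝ (Fin N) :=
  L.subtypeL.comp L.orthogonalProjection

noncomputable def colSpan {N d : ℕ} (Φ : Matrix (Fin N) (Fin d) ℝ) (I : Finset (Fin d)) :
    Submodule ℝ (EuclideanSpace ℝ (Fin N)) :=
  Submodule.span ℝ ((fun j => (WithLp.toLp 2 (fun i => Φ i j) : EuclideanSpace ℝ (Fin N))) '' (I : Set (Fin d)))

/-! The vector `x - P_F x` lies in `E' = Fᗮ ⊓ (E ⊔ F)` at distance `‖P_F x‖` from `x`, so the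
nearest-point property of `P_{E'}` gives the first inequality; the second holds because
`P_F x = P_F (P_E x)` for `x ∈ E`. -/

namespace Submodule

variable {𝕜 V : Type*} [RCLike 𝕜] [NormedAddCommGroup V] [InnerProductSpace 𝕜 V]

theorem norm_sub_starProjection_le_of_mem {U : Submodule 𝕜 V} [U.HasOrthogonalProjection]
    (x : V) {y : V} (hy : y ∈ U) : ‖x - U.starProjection x‖ ≤ ‖x - y‖ := by
  rw [starProjection_minimal]
  exact ciInf_le ⟨0, by rintro _ ⟨z, rfl⟩; positivity⟩ (⟨y, hy⟩ : U)

theorem norm_sub_starProjection_orthogonal_inf_sup_le {E F : Submodule 𝕜 V}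
    [F.HasOrthogonalProjection] [(Fᗮ ⊓ (E ⊔ F)).HasOrthogonalProjection] {x : V} (hx : x ∈ E) :
    ‖x - (Fᗮ ⊓ (E ⊔ F)).starProjection x‖ ≤ ‖F.starProjection x‖ := by
  have hmem : x - F.starProjection x ∈ Fᗮ ⊓ (E ⊔ F) :=
    ⟨sub_starProjection_mem_orthogonal x,
      sub_mem (mem_sup_left hx) (mem_sup_right (starProjection_apply_mem F x))⟩
  simpa only [sub_sub_cancel] using norm_sub_starProjection_le_of_mem x hmem

theorem norm_starProjection_le_opNorm_comp_mul {E F : Submodule 𝕜 V}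
    [E.HasOrthogonalProjection] [F.HasOrthogonalProjection] {x : V} (hx : x ∈ E) :
    ‖F.starProjection x‖ ≤ ‖F.starProjection ∘L E.starProjection‖ * ‖x‖ := by
  simpa [starProjection_eq_self_iff.2 hx] using (F.starProjection ∘L E.starProjection).le_opNorm x

end Submodule

theorem proj_eq_starProjection {N : ℕ} (L : Submodule ℝ (EuclideanSpace ℝ (Fin N))) :
    proj L = L.starProjection :=
  rfl

/-- E is close to E' = F^⊥ ∩ (E + F) when ‖P_F P_E‖ ≤ δ. -/
theorem stmt10 {N : ℕ} (E F : Submodule ℝ (EuclideanSpace ℝ (Fin N))) (δ : ℝ)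
    (h : ‖(proj F).comp (proj E)‖ ≤ δ)
    (x : EuclideanSpace ℝ (Fin N)) (hx : x ∈ E) :
    ‖x - proj (Fᗮ ⊓ (E ⊔ F)) x‖ ≤ ‖proj F x‖ ∧ ‖proj F x‖ ≤ δ * ‖x‖ := by
  simp only [proj_eq_starProjection] at h ⊢
  exact ⟨Submodule.norm_sub_starProjection_orthogonal_inf_sup_le hx,
    (Submodule.norm_starProjection_le_opNorm_comp_mul hx).trans
      (mul_le_mul_of_nonneg_right h (norm_nonneg x))⟩
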